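/- arXiv:0907.4714 — 6 statements merged into one kernel-verified Lean document; each statement's English description precedes it below -/
import Mathlib

section
/- Let G be a group and let a be a central element of G whose image in the abelianization G/[G,G] has infinite order. Then the quotient homomorphism G → G/⟨a⟩ (where ⟨a⟩ is the subgroup generated by a, which is normal since a is central) restricts to an isomorphism from the commutator subgroup [G,G] of G onto the commutator subgroup [G/⟨a⟩, G/⟨a⟩] of G/⟨a⟩. -/
/-
Since `a` has infinite order modulo `[G,G]`, no nontrivial power of `a` is a product of
commutators, so `⟨a⟩ ∩ [G,G] = 1`. Hence the quotient map is injective on `[G,G]`, and a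
surjective homomorphism maps the commutator subgroup onto the commutator subgroup.
-/

lemma zpowers_normal_of_mem_center {G : Type*} [Group G] {a : G}
    (ha : a ∈ Subgroup.center G) : (Subgroup.zpowers a).Normal := by
  constructor
  intro n hn g
  obtain ⟨k, rfl⟩ := Subgroup.mem_zpowers_iff.mp hn
  have hk : a ^ k ∈ Subgroup.center G := Subgroup.zpow_mem _ ha k
  have : g * a ^ k * g⁻¹ = a ^ k := by
    rw [Subgroup.mem_center_iff.mp hk g]
    group
  rw [this]
  exact Subgroup.mem_zpowers_iff.mpr ⟨k, rfl⟩

namespace MonoidHom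

variable {G H : Type*} [Group G] [Group H]

theorem map_commutator_of_surjective (f : G →* H) (hf : Function.Surjective f) :
    (commutator G).map f = commutator H := by
  rw [map_commutator_eq, range_eq_top_of_surjective f hf, commutator_def]

theorem subgroupMap_injective_of_disjoint_ker (f : G →* H) {K : Subgroup G}
    (hK : Disjoint f.ker K) : Function.Injective (f.subgroupMap K) := by
  rwa [← ker_eq_bot_iff, K.ker_subgroupMap, Subgroup.subgroupOf_eq_bot]

noncomputable def commutatorEquivOfDisjointKer (f : G →* H) (hf : Function.Surjective f)
    (hker : Disjoint f.ker (commutator G)) : commutator G ≃* commutator H :=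
  (MulEquiv.ofBijective (f.subgroupMap (commutator G))
      ⟨f.subgroupMap_injective_of_disjoint_ker hker, f.subgroupMap_surjective _⟩).trans
    (MulEquiv.subgroupCongr (f.map_commutator_of_surjective hf))

@[simp]
theorem coe_commutatorEquivOfDisjointKer_apply (f : G →* H) (hf : Function.Surjective f)
    (hker : Disjoint f.ker (commutator G)) (x : commutator G) :
    (f.commutatorEquivOfDisjointKer hf hker x : H) = f x :=
  rfl

end MonoidHom

theorem disjoint_zpowers_commutator_of_not_isOfFinOrder {G : Type*} [Group G] {a : G}
    (ha : ¬IsOfFinOrder (Abelianization.of a)) :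
    Disjoint (Subgroup.zpowers a) (commutator G) := by
  rw [Subgroup.disjoint_def]
  rintro _ ⟨k, rfl⟩ hk
  have hk_ker : Abelianization.of a ^ k = 1 := by
    rwa [← map_zpow, ← MonoidHom.mem_ker, Abelianization.ker_of]
  have hk_zero : k = 0 := injective_zpow_iff_not_isOfFinOrder.mpr ha <| by simpa using hk_ker
  simp [hk_zero]

/-- If `a` is a central element of `G` whose image in the abelianization
has infinite order, then the quotient map `G → G/⟨a⟩` restricts to an isomorphism
`[G,G] ≅ [G/⟨a⟩, G/⟨a⟩]`. -/
theorem commutator_equiv_commutator_quotient_zpowers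
    {G : Type*} [Group G] (a : G) (ha : a ∈ Subgroup.center G)
    (hinf : ¬ IsOfFinOrder (Abelianization.of a)) :
    letI : (Subgroup.zpowers a).Normal := zpowers_normal_of_mem_center ha
    ∃ e : commutator G ≃* commutator (G ⧸ Subgroup.zpowers a),
      ∀ x : commutator G,
        ((e x : commutator (G ⧸ Subgroup.zpowers a)) : G ⧸ Subgroup.zpowers a) =
          QuotientGroup.mk (x : G) := by
  let _ : (Subgroup.zpowers a).Normal := zpowers_normal_of_mem_center ha
  have hker : Disjoint (QuotientGroup.mk' (Subgroup.zpowers a)).ker (commutator G) := by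
    rw [QuotientGroup.ker_mk']
    exact disjoint_zpowers_commutator_of_not_isOfFinOrder hinf
  exact ⟨(QuotientGroup.mk' _).commutatorEquivOfDisjointKer (QuotientGroup.mk'_surjective _) hker,
    fun _ => by simp⟩
end

section
/- Let G be a group, x, y ∈ G, and m, n nonnegative integers. Then {x,y}_m = 1 and {x,y}_n = 1 hold simultaneously if and only if {x,y}_{gcd(m,n)} = 1. -/
/-- The bracket `{x,y}_m`: `(xy)^k (yx)^{-k}` if `m = 2k`, and
`((xy)^k x)((yx)^k y)^{-1}` if `m = 2k+1`. -/
def braidBracket {G : Type*} [Group G] (x y : G) (m : ℕ) : G :=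
  if m % 2 = 0 then (x * y) ^ (m / 2) * ((y * x) ^ (m / 2))⁻¹
  else ((x * y) ^ (m / 2) * x) * ((y * x) ^ (m / 2) * y)⁻¹

/-!
`{x,y}_m = 1` says that the alternating words `xyx⋯` and `yxy⋯` of length `m` agree. If they
agree at length `a`, then agreement at length `a + b` is equivalent to agreement at length `b`:
the common prefix of length `a` cancels, and what remains are the words of length `b`, with `x`
and `y` swapped when `a` is odd. So the set of lengths of agreement is closed under addition and
under subtraction, hence under Euclid's algorithm.
-/

theorem Nat.and_iff_gcd_of_add_iff {P : ℕ → Prop} (hadd : ∀ a b, P a → (P (a + b) ↔ P b))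
    (m n : ℕ) : P m ∧ P n ↔ P (Nat.gcd m n) := by
  have hmul : ∀ {d}, P d → ∀ k, P (d * k) := by
    intro d hd k
    induction k with
    | zero => simpa using (hadd d 0 hd).1 hd
    | succ k ih => rwa [Nat.mul_succ, add_comm, hadd d _ hd]
  have hdvd : ∀ {d a}, P d → d ∣ a → P a := by
    rintro d _ hd ⟨k, rfl⟩
    exact hmul hd k
  have hgcd : ∀ m n, P m → P n → P (Nat.gcd m n) := by
    intro m n
    induction m, n using Nat.gcd.induction with
    | H0 n => simp
    | H1 m n _ ih =>
      intro hm hn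
      rw [← Nat.div_add_mod n m, hadd _ _ (hmul hm _)] at hn
      rw [Nat.gcd_rec]
      exact ih hn hm
  exact ⟨fun h => hgcd m n h.1 h.2,
    fun h => ⟨hdvd h (Nat.gcd_dvd_left m n), hdvd h (Nat.gcd_dvd_right m n)⟩⟩

def altWord {G : Type*} [Group G] (x y : G) : ℕ → G
  | 0 => 1
  | m + 1 => x * altWord y x m

section altWord

variable {G : Type*} [Group G] (x y : G)

theorem altWord_two_mul_add (k b : ℕ) :
    altWord x y (2 * k + b) = altWord x y (2 * k) * altWord x y b := by
  induction k with
  | zero => simp [altWord]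
  | succ k ih =>
    rw [show 2 * (k + 1) + b = 2 * k + b + 2 by ring, show 2 * (k + 1) = 2 * k + 2 by ring]
    simp only [altWord, ih, mul_assoc]

theorem altWord_two_mul (k : ℕ) : altWord x y (2 * k) = (x * y) ^ k := by
  induction k with
  | zero => simp [altWord]
  | succ k ih => rw [mul_add, altWord_two_mul_add, ih, pow_succ]; simp [altWord]

theorem altWord_two_mul_add_one_add (k b : ℕ) :
    altWord x y (2 * k + 1 + b) = altWord x y (2 * k + 1) * altWord y x b := by
  rw [add_assoc, altWord_two_mul_add, altWord_two_mul_add x y k 1, add_comm]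
  simp [altWord, mul_assoc]

theorem altWord_two_mul_add_one (k : ℕ) : altWord x y (2 * k + 1) = (x * y) ^ k * x := by
  rw [altWord_two_mul_add, altWord_two_mul]
  simp [altWord]

theorem braidBracket_eq_altWord_mul_inv (m : ℕ) :
    braidBracket x y m = altWord x y m * (altWord y x m)⁻¹ := by
  obtain ⟨k, rfl | rfl⟩ := Nat.even_or_odd' m
  · simp [braidBracket, altWord_two_mul]
  · have hodd : (2 * k + 1) % 2 ≠ 0 := by omega
    have hhalf : (2 * k + 1) / 2 = k := by omega
    rw [braidBracket, if_neg hodd, hhalf, altWord_two_mul_add_one, altWord_two_mul_add_one]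

theorem braidBracket_eq_one_iff (m : ℕ) :
    braidBracket x y m = 1 ↔ altWord x y m = altWord y x m := by
  rw [braidBracket_eq_altWord_mul_inv, mul_inv_eq_one]

variable {x y}

theorem altWord_add_eq_iff {a : ℕ} (ha : altWord x y a = altWord y x a) (b : ℕ) :
    altWord x y (a + b) = altWord y x (a + b) ↔ altWord x y b = altWord y x b := by
  obtain ⟨k, rfl | rfl⟩ := Nat.even_or_odd' a
  · rw [altWord_two_mul_add, altWord_two_mul_add, ha, mul_right_inj]
  · rw [altWord_two_mul_add_one_add, altWord_two_mul_add_one_add, ha, mul_right_inj, eq_comm]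

end altWord

/-- `{x,y}_m = 1` and `{x,y}_n = 1` hold simultaneously iff
`{x,y}_{gcd(m,n)} = 1`. -/
theorem braidBracket_eq_one_and_iff_gcd {G : Type*} [Group G] (x y : G) (m n : ℕ) :
    (braidBracket x y m = 1 ∧ braidBracket x y n = 1) ↔
      braidBracket x y (Nat.gcd m n) = 1 := by
  simp only [braidBracket_eq_one_iff]
  exact Nat.and_iff_gcd_of_add_iff (P := fun k => altWord x y k = altWord y x k)
    (fun _ _ ha => altWord_add_eq_iff ha _) m n
end

section
/- Let G be a group and a, b, c ∈ G. If (abc)^4 = (bc)^3 and a = c^{-1}bc, then the element (bc)^3 commutes with each of a, b, and c; in particular, if G is generated by a, b, c, then (bc)^3 is central in G. -/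
/-!
Put `x = bc`. The inner-loop relation gives `abc = c⁻¹(bc)² = c⁻¹x²`, so `c = x²(abc)⁻¹`.
The relation at infinity makes `x³ = (abc)⁴` a power of `abc`, so `x³` commutes with `abc`,
and trivially with `x`; hence with `c`, then with `b = xc⁻¹`, and with `a = c⁻¹bc`.
-/

namespace Subgroup

theorem mem_center_of_forall_commute_of_closure_eq_top {G : Type*} [Group G] {s : Set G}
    (hs : closure s = ⊤) {x : G} (hx : ∀ g ∈ s, Commute x g) : x ∈ center G := by
  rw [← centralizer_univ, ← coe_top, ← hs, centralizer_closure]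
  exact fun g hg ↦ (hx g hg).symm.eq

end Subgroup

section

variable {G : Type*} [Group G] {a b c : G}

theorem mul_mul_eq_inv_mul_sq_of_eq_conj (h : a = c⁻¹ * b * c) :
    a * b * c = c⁻¹ * (b * c) ^ 2 := by
  rw [h, sq]
  group

theorem commute_pow_three_right_of_eq_conj (h1 : (a * b * c) ^ 4 = (b * c) ^ 3)
    (h2 : a = c⁻¹ * b * c) : Commute ((b * c) ^ 3) c := by
  have hc : c = (b * c) ^ 2 * (a * b * c)⁻¹ := by
    rw [mul_mul_eq_inv_mul_sq_of_eq_conj h2]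
    group
  have habc : Commute ((b * c) ^ 3) (a * b * c) := h1 ▸ (Commute.refl _).pow_left 4
  have hcomm := ((Commute.refl (b * c)).pow_pow 3 2).mul_right habc.inv_right
  rwa [← hc] at hcomm

end

/-- If `(abc)^4 = (bc)^3` and `a = c⁻¹bc`, then `(bc)^3` commutes with
each of `a`, `b`, `c`; in particular, if `G` is generated by `a`, `b`, `c`, then `(bc)^3`
is central in `G`. -/
theorem central_of_relation_at_infinity_and_inner_loop {G : Type*} [Group G] (a b c : G)
    (h1 : (a * b * c) ^ 4 = (b * c) ^ 3) (h2 : a = c⁻¹ * b * c) :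
    Commute ((b * c) ^ 3) a ∧ Commute ((b * c) ^ 3) b ∧ Commute ((b * c) ^ 3) c ∧
      (Subgroup.closure {a, b, c} = ⊤ → (b * c) ^ 3 ∈ Subgroup.center G) := by
  have hc : Commute ((b * c) ^ 3) c := commute_pow_three_right_of_eq_conj h1 h2
  have hb : Commute ((b * c) ^ 3) b := by
    simpa using ((Commute.refl (b * c)).pow_left 3).mul_right hc.inv_right
  have ha : Commute ((b * c) ^ 3) a := h2 ▸ (hc.inv_right.mul_right hb).mul_right hc
  refine ⟨ha, hb, hc, fun hgen ↦ Subgroup.mem_center_of_forall_commute_of_closure_eq_top hgen ?_⟩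
  rintro g (rfl | rfl | rfl)
  exacts [ha, hb, hc]
end

section
/- Let G be a group and a, b, c ∈ G. If (abc)^4 = (bc)^3 and c commutes with ab, then the element (abc)^4 commutes with each of a, b, and c; in particular, if G is generated by a, b, c, then (abc)^4 = (bc)^3 is central in G. -/
/-! Write `t = (abc)^4`. Since `c` commutes with `ab`, it commutes with `abc` and hence with `t`.
The relation `t = (bc)^3` makes `t` commute with `bc`; cancelling `c` gives `b`, and cancelling
`bc` from `abc`, which commutes with its own power `t`, gives `a`. An element commuting with a
generating set is central. -/

namespace Commute

variable {G : Type*} [Group G]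

theorem of_mul_right_of_right {x y z : G} (hyz : Commute x (y * z)) (hz : Commute x z) :
    Commute x y := by
  simpa only [mul_inv_cancel_right] using hyz.mul_right hz.inv_right

end Commute

/-- If `(abc)^4 = (bc)^3` and `c` commutes with `ab`, then `(abc)^4`
commutes with each of `a`, `b`, `c`; in particular, if `G` is generated by `a`, `b`, `c`,
then `(abc)^4 = (bc)^3` is central in `G`. -/
theorem central_of_relation_at_infinity_and_D_fiber {G : Type*} [Group G] (a b c : G)
    (h1 : (a * b * c) ^ 4 = (b * c) ^ 3) (h2 : Commute c (a * b)) :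
    Commute ((a * b * c) ^ 4) a ∧ Commute ((a * b * c) ^ 4) b ∧
      Commute ((a * b * c) ^ 4) c ∧
      (Subgroup.closure {a, b, c} = ⊤ → (a * b * c) ^ 4 ∈ Subgroup.center G) := by
  have hc : Commute ((a * b * c) ^ 4) c := (h2.symm.mul_left (Commute.refl c)).pow_left 4
  have hbc : Commute ((a * b * c) ^ 4) (b * c) := h1 ▸ Commute.pow_self (b * c) 3
  have hb : Commute ((a * b * c) ^ 4) b := hbc.of_mul_right_of_right hc
  have ha : Commute ((a * b * c) ^ 4) a := by
    have habc : Commute ((a * b * c) ^ 4) (a * (b * c)) := mul_assoc a b c ▸ Commute.pow_self _ 4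
    exact habc.of_mul_right_of_right hbc
  refine ⟨ha, hb, hc, fun hgen => Subgroup.mem_center_of_forall_commute_of_closure_eq_top hgen ?_⟩
  rintro g (rfl | rfl | rfl) <;> assumption
end

section
/- The group with presentation ⟨x, y | xyx = yxy, (xy)^3 = 1, x^5 = 1⟩ is isomorphic to the alternating group A_5 on five letters; in particular it has order 60. -/
/-!
With `t = x⁻¹` and `s = xyx` the relations become `t ^ 5 = s ^ 2 = (s * t) ^ 3 = 1`, which hold
in `PSL(2, 5)` for `t = [[1, 1], [0, 1]]` and `s = [[0, -1], [1, 0]]`. In any group generated by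
such `t` and `s` the Bruhat decomposition `B ∪ U s B` holds, where `U = ⟨t⟩` has at most 5
elements and the Borel subgroup `B = U ∪ U e`, for an involution `e` inverting `t`, at most 10;
so the group has at most `10 + 5 * 10 = 60` elements. Conversely `x ↦ (0 1 2 3 4)`,
`y ↦ (0 2 4 3 1)` defines a homomorphism to `A₅` whose image contains elements of orders 2, 3
and 5, hence has index at most 2, hence is everything since `A₅` is simple.
-/

namespace Stmt11

def x : FreeGroup (Fin 2) := FreeGroup.of 0
def y : FreeGroup (Fin 2) := FreeGroup.of 1

/-- Relators: `xyx = yxy`, `(xy)^3 = 1`, `x^5 = 1`. -/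
def rels : Set (FreeGroup (Fin 2)) :=
  {x * y * x * (y * x * y)⁻¹,
   (x * y) ^ 3,
   x ^ 5}

/-- The quotient of the reduced braid group `B₃/(σ₁σ₂)³` by the normal closure of
`σ₁^5`. -/
abbrev G := PresentedGroup rels

end Stmt11

section

variable {H : Type*} [Group H]

theorem Subgroup.closure_subset_of_forall_mul_mem {S M : Set H}
    (hS : ∀ g ∈ S, IsOfFinOrder g) (hM₁ : 1 ∈ M)
    (hM : ∀ g ∈ S, ∀ m ∈ M, g * m ∈ M) :
    (closure S : Set H) ⊆ M := by
  intro g hg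
  rw [SetLike.mem_coe, ← mem_toSubmonoid, closure_toSubmonoid_of_isOfFinOrder hS] at hg
  suffices ∀ m ∈ M, g * m ∈ M by simpa only [mul_one] using this 1 hM₁
  induction hg using Submonoid.closure_induction with
  | mem g hg => exact hM g hg
  | one => exact fun m hm => by rwa [one_mul]
  | mul a b _ _ ha hb => exact fun m hm => mul_assoc a b m ▸ ha _ (hb m hm)

theorem Subgroup.exists_lt_pow_eq_of_mem_zpowers {t u : H} {n : ℕ} (hn : 0 < n)
    (ht : t ^ n = 1) (hu : u ∈ zpowers t) : ∃ i < n, t ^ i = u := by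
  obtain ⟨m, rfl⟩ :=
    (isOfFinOrder_iff_pow_eq_one.mpr ⟨n, hn, ht⟩).mem_powers_iff_mem_zpowers.mpr hu
  exact ⟨m % n, Nat.mod_lt m hn, (pow_eq_pow_mod m ht).symm⟩

theorem Subgroup.prime_dvd_natCard_of_pow_eq_one {L : Subgroup H} {p : ℕ} [Fact p.Prime] {g : H}
    (hg : g ∈ L) (hp : g ^ p = 1) (h1 : g ≠ 1) : p ∣ Nat.card L :=
  orderOf_eq_prime hp h1 ▸ L.orderOf_dvd_natCard hg

theorem Subgroup.eq_top_of_index_dvd_two [IsSimpleGroup H] (hH : 2 < Nat.card H)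
    {L : Subgroup H} (hL : L.index ∣ 2) : L = ⊤ := by
  rcases (Nat.dvd_prime Nat.prime_two).mp hL with h | h
  · exact index_eq_one.mp h
  · rcases (normal_of_index_eq_two h).eq_bot_or_eq_top with rfl | rfl
    · rw [index_bot] at h
      omega
    · rfl

end

namespace Stmt11

section TriangleGroup

variable {H : Type*} [Group H] {t s : H}

theorem mul_mul_cancel_of_sq_eq_one (hs : s ^ 2 = 1) (g : H) : s * (s * g) = g := by
  rw [← mul_assoc, ← sq, hs, one_mul]

theorem s_mul_t_mul_s (hs : s ^ 2 = 1) (hst : (s * t) ^ 3 = 1) :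
    s * t * s = t⁻¹ * s * t⁻¹ := by
  have h : s * t * s * (t * s * t) = 1 := by
    rw [← hst]
    simp only [pow_succ, pow_zero, one_mul, mul_assoc]
  rw [eq_inv_of_mul_eq_one_left h, mul_inv_rev, mul_inv_rev,
    inv_eq_of_mul_eq_one_right ((sq s).symm.trans hs), mul_assoc]

theorem s_mul_t_inv_mul_s (hs : s ^ 2 = 1) (hst : (s * t) ^ 3 = 1) :
    s * t⁻¹ * s = t * s * t := by
  simpa only [mul_inv_rev, inv_inv, inv_eq_of_mul_eq_one_right ((sq s).symm.trans hs), mul_assoc]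
    using congrArg (·⁻¹) (s_mul_t_mul_s hs hst)

theorem pow_three_eq_inv_pow_two (ht : t ^ 5 = 1) : t ^ 3 = t⁻¹ ^ 2 := by
  rw [inv_pow, eq_inv_iff_mul_eq_one, ← pow_add, ht]

/-- In `PSL(2, 5)`, with `t = [[1, 1], [0, 1]]` and `s = [[0, -1], [1, 0]]`, this is the upper
triangular involution `[[2, -1], [0, 3]]`. -/
def borelInvolution (t s : H) : H := s * t⁻¹ ^ 2 * s * t ^ 2 * s

theorem borelInvolution_mul_self (hs : s ^ 2 = 1) :
    borelInvolution t s * borelInvolution t s = 1 := by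
  simp only [borelInvolution, mul_assoc, pow_succ, pow_zero, one_mul,
    mul_mul_cancel_of_sq_eq_one hs, mul_inv_cancel_left, inv_mul_cancel_left,
    (sq s).symm.trans hs]

theorem t_mul_borelInvolution_mul_t (ht : t ^ 5 = 1) (hs : s ^ 2 = 1) (hst : (s * t) ^ 3 = 1) :
    t * borelInvolution t s * t = borelInvolution t s := by
  have hss := mul_mul_cancel_of_sq_eq_one hs
  have h₁ : t * borelInvolution t s * t = t * s * t ^ 2 * s * t⁻¹ ^ 2 * s := calc
    _ = t * s * t⁻¹ ^ 2 * (s * t * s) * (s * t * s) * t := by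
      simp only [borelInvolution, mul_assoc, pow_succ, pow_zero, one_mul, hss]
    _ = t * s * t⁻¹ ^ 3 * s * t⁻¹ ^ 2 * s := by
      rw [s_mul_t_mul_s hs hst]
      simp only [mul_assoc, pow_succ, pow_zero, one_mul, inv_mul_cancel, mul_one]
    _ = t * s * t ^ 2 * s * t⁻¹ ^ 2 * s := by
      rw [pow_three_eq_inv_pow_two (by rw [inv_pow, ht, inv_one]), inv_inv]
  have h₂ : borelInvolution t s = t * s * t ^ 2 * s * t⁻¹ ^ 2 * s := calc
    _ = (s * t⁻¹ * s) * (s * t⁻¹ * s) * t ^ 2 * s := by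
      simp only [borelInvolution, mul_assoc, pow_succ, pow_zero, one_mul, hss]
    _ = t * s * t ^ 2 * s * t ^ 3 * s := by
      rw [s_mul_t_inv_mul_s hs hst]
      simp only [mul_assoc, pow_succ, pow_zero, one_mul]
    _ = t * s * t ^ 2 * s * t⁻¹ ^ 2 * s := by rw [pow_three_eq_inv_pow_two ht]
  rw [h₁, h₂]

theorem borelInvolution_mul_zpow (ht : t ^ 5 = 1) (hs : s ^ 2 = 1) (hst : (s * t) ^ 3 = 1)
    (k : ℤ) : borelInvolution t s * t ^ k = t⁻¹ ^ k * borelInvolution t s := by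
  have h : borelInvolution t s * t = t⁻¹ * borelInvolution t s := by
    conv_rhs => rw [← t_mul_borelInvolution_mul_t ht hs hst]
    simp only [mul_assoc, inv_mul_cancel_left]
  exact SemiconjBy.zpow_right h k

def borel (t s : H) : Subgroup H := Subgroup.closure {t, borelInvolution t s}

def bigCell (t s : H) : Set H :=
  {g | ∃ u ∈ Subgroup.zpowers t, ∃ b ∈ borel t s, g = u * s * b}

theorem t_mem_borel : t ∈ borel t s := Subgroup.subset_closure (Set.mem_insert t _)

theorem borelInvolution_mem_borel : borelInvolution t s ∈ borel t s :=
  Subgroup.subset_closure (Set.mem_insert_of_mem t rfl)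

theorem exists_eq_or_eq_mul_of_mem_borel (ht : t ^ 5 = 1) (hs : s ^ 2 = 1)
    (hst : (s * t) ^ 3 = 1) {b : H} (hb : b ∈ borel t s) :
    ∃ u ∈ Subgroup.zpowers t, b = u ∨ b = u * borelInvolution t s := by
  set e := borelInvolution t s
  refine Subgroup.closure_subset_of_forall_mul_mem
    (M := {b | ∃ u ∈ Subgroup.zpowers t, b = u ∨ b = u * e})
    ?_ ⟨1, one_mem _, Or.inl rfl⟩ ?_ hb
  · rintro g (rfl | rfl)
    · exact isOfFinOrder_iff_pow_eq_one.mpr ⟨5, by norm_num, ht⟩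
    · exact isOfFinOrder_iff_pow_eq_one.mpr
        ⟨2, by norm_num, (sq e).trans (borelInvolution_mul_self hs)⟩
  rintro g hg m ⟨u, hu, hm | hm⟩ <;> rcases hg with hg | hg <;> subst g m
  · exact ⟨t * u, mul_mem (Subgroup.mem_zpowers t) hu, Or.inl rfl⟩
  · obtain ⟨k, rfl⟩ := Subgroup.mem_zpowers_iff.mp hu
    exact ⟨t⁻¹ ^ k, zpow_mem (inv_mem (Subgroup.mem_zpowers t)) k,
      Or.inr (borelInvolution_mul_zpow ht hs hst k)⟩
  · exact ⟨t * u, mul_mem (Subgroup.mem_zpowers t) hu, Or.inr (mul_assoc t u e).symm⟩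
  · obtain ⟨k, rfl⟩ := Subgroup.mem_zpowers_iff.mp hu
    refine ⟨t⁻¹ ^ k, zpow_mem (inv_mem (Subgroup.mem_zpowers t)) k, Or.inl ?_⟩
    rw [← mul_assoc, borelInvolution_mul_zpow ht hs hst, mul_assoc, borelInvolution_mul_self hs,
      mul_one]

theorem s_mul_mul_s_mem_borel_union_bigCell (ht : t ^ 5 = 1) (hs : s ^ 2 = 1)
    (hst : (s * t) ^ 3 = 1) {u : H} (hu : u ∈ Subgroup.zpowers t) :
    s * u * s ∈ (borel t s : Set H) ∪ bigCell t s := by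
  have hss := mul_mul_cancel_of_sq_eq_one hs
  obtain ⟨i, hi, rfl⟩ := Subgroup.exists_lt_pow_eq_of_mem_zpowers (by norm_num) ht hu
  interval_cases i
  · left
    rw [pow_zero, mul_one, ← sq, hs]
    exact one_mem _
  · right
    refine ⟨t⁻¹, inv_mem (Subgroup.mem_zpowers t), t⁻¹, inv_mem t_mem_borel, ?_⟩
    rw [pow_one, s_mul_t_mul_s hs hst]
  · -- `borelInvolution` is chosen so that this case holds by definition.
    right
    refine ⟨t ^ 2, pow_mem (Subgroup.mem_zpowers t) 2, _, borelInvolution_mem_borel, ?_⟩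
    simp only [borelInvolution, mul_assoc, pow_succ, pow_zero, one_mul, hss, mul_inv_cancel_left]
  · right
    refine ⟨t ^ 3, pow_mem (Subgroup.mem_zpowers t) 3, _,
      mul_mem borelInvolution_mem_borel t_mem_borel, ?_⟩
    calc s * t ^ 3 * s = (s * t⁻¹ * s) * (s * t⁻¹ * s) := by
          rw [pow_three_eq_inv_pow_two ht]
          simp only [mul_assoc, pow_succ, pow_zero, one_mul, hss]
      _ = (t * s * t) * (t * s * t) := by rw [s_mul_t_inv_mul_s hs hst]
      _ = t ^ 3 * s * (borelInvolution t s * t) := by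
          simp only [borelInvolution, mul_assoc, pow_succ, pow_zero, one_mul, hss,
            mul_inv_cancel_left]
  · right
    refine ⟨t, Subgroup.mem_zpowers t, t, t_mem_borel, ?_⟩
    rw [eq_inv_of_mul_eq_one_left (by rw [← pow_succ, ht] : t ^ 4 * t = 1),
      s_mul_t_inv_mul_s hs hst]

theorem borel_union_bigCell_eq_univ (ht : t ^ 5 = 1) (hs : s ^ 2 = 1) (hst : (s * t) ^ 3 = 1)
    (hgen : Subgroup.closure {t, s} = ⊤) : (borel t s : Set H) ∪ bigCell t s = Set.univ := by
  refine Set.eq_univ_of_univ_subset ?_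
  rw [← Subgroup.coe_top, ← hgen]
  refine Subgroup.closure_subset_of_forall_mul_mem ?_ (Or.inl (one_mem _)) ?_
  · rintro g (rfl | rfl)
    · exact isOfFinOrder_iff_pow_eq_one.mpr ⟨5, by norm_num, ht⟩
    · exact isOfFinOrder_iff_pow_eq_one.mpr ⟨2, by norm_num, hs⟩
  rintro g hg m (hm | ⟨u, hu, b, hb, rfl⟩) <;> rcases hg with hg | hg <;> subst g
  · exact Or.inl (mul_mem t_mem_borel hm)
  · exact Or.inr ⟨1, one_mem _, m, hm, by rw [one_mul]⟩
  · exact Or.inr ⟨t * u, mul_mem (Subgroup.mem_zpowers t) hu, b, hb, by simp only [mul_assoc]⟩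
  · have hsusb : s * (u * s * b) = s * u * s * b := by simp only [mul_assoc]
    rcases s_mul_mul_s_mem_borel_union_bigCell ht hs hst hu with h | ⟨u', hu', b', hb', h⟩
    · exact Or.inl (hsusb ▸ mul_mem h hb)
    · exact Or.inr ⟨u', hu', b' * b, mul_mem hb' hb, by rw [hsusb, h]; simp only [mul_assoc]⟩

theorem finite_and_natCard_le_sixty (ht : t ^ 5 = 1) (hs : s ^ 2 = 1) (hst : (s * t) ^ 3 = 1)
    (hgen : Subgroup.closure {t, s} = ⊤) : Finite H ∧ Nat.card H ≤ 60 := by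
  have hU : ∀ u ∈ Subgroup.zpowers t, ∃ i : Fin 5, t ^ (i : ℕ) = u := fun u hu => by
    obtain ⟨i, hi, rfl⟩ := Subgroup.exists_lt_pow_eq_of_mem_zpowers (by norm_num) ht hu
    exact ⟨⟨i, hi⟩, rfl⟩
  have hB : ∀ b ∈ borel t s,
      ∃ i : Fin 5, ∃ j : Fin 2, t ^ (i : ℕ) * borelInvolution t s ^ (j : ℕ) = b := by
    intro b hb
    obtain ⟨u, hu, hb | hb⟩ := exists_eq_or_eq_mul_of_mem_borel ht hs hst hb <;> subst b <;>
      obtain ⟨i, rfl⟩ := hU u hu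
    · exact ⟨i, 0, by simp⟩
    · exact ⟨i, 1, by simp⟩
  let f : Option (Fin 5) × Fin 5 × Fin 2 → H := fun ⟨w, i, j⟩ =>
    w.elim 1 (fun k => t ^ (k : ℕ) * s) * (t ^ (i : ℕ) * borelInvolution t s ^ (j : ℕ))
  have hf : Function.Surjective f := by
    intro g
    rcases (borel_union_bigCell_eq_univ ht hs hst hgen).ge (Set.mem_univ g) with
      hg | ⟨u, hu, b, hb, rfl⟩
    · obtain ⟨i, j, rfl⟩ := hB g hg
      exact ⟨(none, i, j), one_mul _⟩
    · obtain ⟨i, j, rfl⟩ := hB b hb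
      obtain ⟨k, rfl⟩ := hU u hu
      exact ⟨(some k, i, j), rfl⟩
  exact ⟨Finite.of_surjective f hf, (Nat.card_le_card_of_surjective f hf).trans (by simp)⟩

end TriangleGroup

def X : G := PresentedGroup.mk rels x
def Y : G := PresentedGroup.mk rels y

theorem X_pow_five : X ^ 5 = 1 := by
  rw [X, ← map_pow]
  exact PresentedGroup.one_of_mem (by simp [rels])

theorem X_mul_Y_pow_three : (X * Y) ^ 3 = 1 := by
  rw [X, Y, ← map_mul, ← map_pow]
  exact PresentedGroup.one_of_mem (by simp [rels])

theorem X_mul_Y_mul_X : X * Y * X = Y * X * Y := by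
  rw [← mul_inv_eq_one, X, Y]
  simp only [← map_mul, ← map_inv]
  exact PresentedGroup.one_of_mem (by simp [rels])

theorem X_mul_Y_mul_X_sq : (X * Y * X) ^ 2 = 1 := by
  rw [sq]
  nth_rewrite 2 [X_mul_Y_mul_X]
  rw [← X_mul_Y_pow_three]
  simp only [pow_succ, pow_zero, one_mul, mul_assoc]

theorem closure_X_inv_X_mul_Y_mul_X : Subgroup.closure {X⁻¹, X * Y * X} = ⊤ := by
  rw [eq_top_iff, ← PresentedGroup.closure_range_of rels, Subgroup.closure_le,
    Set.range_subset_iff]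
  have hX : X ∈ Subgroup.closure {X⁻¹, X * Y * X} :=
    inv_inv X ▸ inv_mem (Subgroup.subset_closure (Set.mem_insert _ _))
  intro i
  fin_cases i
  · exact hX
  · have h := mul_mem
      (mul_mem (inv_mem hX) (Subgroup.subset_closure (Set.mem_insert_of_mem _ rfl))) (inv_mem hX)
    rwa [show X⁻¹ * (X * Y * X) * X⁻¹ = Y by
      simp only [mul_assoc, inv_mul_cancel_left, mul_inv_cancel, mul_one]] at h

theorem natCard_alternatingGroup_fin_five : Nat.card (alternatingGroup (Fin 5)) = 60 := by
  rw [nat_card_alternatingGroup, Nat.card_eq_fintype_card, Fintype.card_fin]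
  rfl

open Equiv in
def permX : alternatingGroup (Fin 5) := ⟨finRotate 5, Perm.mem_alternatingGroup.mpr (by decide)⟩

open Equiv in
def permY : alternatingGroup (Fin 5) :=
  ⟨c[0, 2, 4, 3, 1], Perm.mem_alternatingGroup.mpr (by decide)⟩

def toAlternatingGroup : G →* alternatingGroup (Fin 5) :=
  PresentedGroup.toGroup (f := ![permX, permY]) <| by
    rintro r (rfl | rfl | rfl) <;> simp [x, y] <;> decide

theorem toAlternatingGroup_surjective : Function.Surjective toAlternatingGroup := by
  set L := toAlternatingGroup.range
  have hX : permX ∈ L := ⟨X, PresentedGroup.toGroup.of _⟩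
  have hY : permY ∈ L := ⟨Y, PresentedGroup.toGroup.of _⟩
  have : Fact (Nat.Prime 5) := ⟨by norm_num⟩
  have h₂ := L.prime_dvd_natCard_of_pow_eq_one (p := 2) (mul_mem (mul_mem hX hY) hX)
    (by decide) (by decide)
  have h₃ := L.prime_dvd_natCard_of_pow_eq_one (p := 3) (mul_mem hX hY) (by decide) (by decide)
  have h₅ := L.prime_dvd_natCard_of_pow_eq_one (p := 5) hX (by decide) (by decide)
  obtain ⟨m, hm⟩ : 30 ∣ Nat.card L := Nat.Coprime.mul_dvd_of_dvd_of_dvd (by norm_num)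
    (Nat.Coprime.mul_dvd_of_dvd_of_dvd (by norm_num) h₂ h₃) h₅
  have hL := L.card_mul_index
  rw [hm, natCard_alternatingGroup_fin_five] at hL
  rw [← MonoidHom.range_eq_top]
  exact Subgroup.eq_top_of_index_dvd_two (by rw [natCard_alternatingGroup_fin_five]; norm_num)
    (Dvd.intro_left m (by linarith))

/-- `G` is isomorphic to the alternating group `A₅` on five letters;
in particular it has order `60`. -/
theorem iso_alternating :
    Nonempty (G ≃* alternatingGroup (Fin 5)) ∧ Nat.card G = 60 := by
  obtain ⟨_, hcard⟩ := finite_and_natCard_le_sixty (by rw [inv_pow, X_pow_five, inv_one])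
    X_mul_Y_mul_X_sq (by rw [mul_inv_cancel_right, X_mul_Y_pow_three]) closure_X_inv_X_mul_Y_mul_X
  have hbij : Function.Bijective toAlternatingGroup :=
    toAlternatingGroup_surjective.bijective_of_nat_card_le
      (hcard.trans natCard_alternatingGroup_fin_five.ge)
  let e := MulEquiv.ofBijective toAlternatingGroup hbij
  exact ⟨⟨e⟩, (Nat.card_congr e.toEquiv).trans natCard_alternatingGroup_fin_five⟩

end Stmt11
end

section
/- The group with presentation ⟨a, b, c | (abc)^4 = (bc)^3, a = c^{-1}bc, ((abc)aba) b ((abc)aba)^{-1} = a, ((abc)ab) a ((abc)ab)^{-1} = b⟩ is abelian. -/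
/-!
The last two relations say that conjugation by `y = abcab` maps `a ↦ b` and conjugation by `ya`
maps `b ↦ a`; together they force `y`, hence `c`, to commute with `ab`. With `ca = bc` this makes
conjugation by `c` act as `a ↦ b`, `b ↦ b⁻¹ab`, and makes `(ab)²` central in `⟨a, b⟩`. The
first relation then reads `(ab)⁴c = bab`, so `c` is `bab` up to a central factor, and the
conjugation rules for `c` become conditions on `bab` alone: they give the braid relation
`aba = bab` and then `ab = ba`, whence `a = b` and `c = a⁻⁵`. So the group is cyclic.
-/

namespace Stmt19

def a : FreeGroup (Fin 3) := FreeGroup.of 0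
def b : FreeGroup (Fin 3) := FreeGroup.of 1
def c : FreeGroup (Fin 3) := FreeGroup.of 2

/-- Relators: `(abc)^4 = (bc)^3`, `a = c⁻¹bc`,
`((abc)aba) b ((abc)aba)⁻¹ = a`, `((abc)ab) a ((abc)ab)⁻¹ = b`. -/
def rels : Set (FreeGroup (Fin 3)) :=
  {(a * b * c) ^ 4 * ((b * c) ^ 3)⁻¹,
   a * (c⁻¹ * b * c)⁻¹,
   ((a * b * c) * a * b * a) * b * ((a * b * c) * a * b * a)⁻¹ * a⁻¹,
   ((a * b * c) * a * b) * a * ((a * b * c) * a * b)⁻¹ * b⁻¹}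

/-- The fundamental group of the reducible maximizing sextic with the set of
singularities `E6 ⊕ D7 ⊕ D6` (no. 17′). -/
abbrev G := PresentedGroup rels

section
variable {H : Type*} [Group H]

theorem commute_mul_of_conj_eq {y a b : H} (ha : y * a * y⁻¹ = b)
    (hb : (y * a) * b * (y * a)⁻¹ = a) : Commute y (a * b) := by
  have hyb : b * (y * b * y⁻¹) * b⁻¹ = a := by
    calc b * (y * b * y⁻¹) * b⁻¹ = (y * a * y⁻¹) * (y * b * y⁻¹) * (y * a * y⁻¹)⁻¹ := by
          rw [ha]
      _ = (y * a) * b * (y * a)⁻¹ := by group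
      _ = a := hb
  calc y * (a * b) = (y * a * y⁻¹) * (y * b * y⁻¹) * y := by group
    _ = a * b * y := by rw [ha, ← mul_inv_eq_iff_eq_mul.mp hyb]

theorem commute_of_commute_mul_mul {c x : H} (h : Commute (x * c * x) x) : Commute c x := by
  have : x * (c * x) * x = x * (x * c) * x := by simpa only [mul_assoc] using h.eq
  exact mul_left_cancel (mul_right_cancel this)

theorem commute_of_conj_mul_eq {z c a b : H} (hca : c * a = b * c)
    (h : (z * c) * a * (z * c)⁻¹ = b) : Commute z b := by
  calc z * b = z * (c * a) * (z * c)⁻¹ * z := by rw [hca]; group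
    _ = b * z := by rw [← h]; group

variable {a b c : H}

theorem semiconj_right_of_commute_mul (hca : c * a = b * c) (hc : Commute c (a * b)) :
    c * b = b⁻¹ * a * b * c := by
  calc c * b = b⁻¹ * (b * c) * a⁻¹ * (a * b) := by group
    _ = b⁻¹ * (c * (a * b)) := by rw [← hca]; group
    _ = b⁻¹ * a * b * c := by rw [hc.eq]; group

theorem mul_pow_three_eq_of_semiconj (hca : c * a = b * c) (hcb : c * b = b⁻¹ * a * b * c) :
    (b * c) ^ 3 = b * a * b * c ^ 3 := by
  have hcb' : c * b⁻¹ = b⁻¹ * a⁻¹ * b * c := by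
    calc c * b⁻¹ = (c * b * c⁻¹)⁻¹ * c := by group
      _ = b⁻¹ * a⁻¹ * b * c := by rw [hcb]; group
  calc (b * c) ^ 3 = b * (c * b) * (c * b) * c := by rw [pow_three]; group
    _ = a * b * (c * b⁻¹) * (a * b * c) * c := by rw [hcb]; group
    _ = b * (c * a) * b * c * c := by rw [hcb']; group
    _ = b * b * (c * b) * c * c := by rw [hca]; group
    _ = b * a * b * c ^ 3 := by rw [hcb, pow_three]; group

theorem eq_of_semiconjBy_mul_mul (ha : SemiconjBy (b * a * b) a b)
    (hb : SemiconjBy (b * a * b) b (b⁻¹ * a * b)) : a = b := by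
  have braid : a * b * a = b * a * b :=
    mul_left_cancel (a := b) (by rw [← ha.eq]; group)
  have hab : a * (a * b) = (a * b) * a := by
    refine mul_left_cancel (a := a * b) ?_
    calc (a * b) * (a * (a * b)) = (a * b * a) * (a * b) := by group
      _ = (b * a * b) * (a * b) := by rw [braid]
      _ = b * ((a * b * a) * b) := by group
      _ = b * ((b * a * b) * b) := by rw [braid]
      _ = b * (b⁻¹ * a * b * (b * a * b)) := by rw [hb.eq]
      _ = (a * b) * ((a * b) * a) := by rw [← braid]; group
  refine mul_right_cancel (b := a) (mul_right_cancel (b := b) ?_)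
  calc a * a * b = (a * b) * a := by rw [mul_assoc, hab]
    _ = b * a * b := braid

theorem eq_and_eq_zpow_of_rels (h1 : (a * b * c) ^ 4 = (b * c) ^ 3) (h2 : a = c⁻¹ * b * c)
    (h3 : (a * b * c * a * b * a) * b * (a * b * c * a * b * a)⁻¹ = a)
    (h4 : (a * b * c * a * b) * a * (a * b * c * a * b)⁻¹ = b) :
    b = a ∧ c = a ^ (-5 : ℤ) := by
  have hca : c * a = b * c := by rw [h2]; group
  have hc : Commute c (a * b) := by
    refine commute_of_commute_mul_mul ?_
    simpa only [mul_assoc] using commute_mul_of_conj_eq h4 h3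
  have hcb : c * b = b⁻¹ * a * b * c := semiconj_right_of_commute_mul hca hc
  have hzb : Commute ((a * b) ^ 2) b := by
    refine commute_of_conj_mul_eq hca ?_
    rwa [pow_two, mul_assoc (a * b), ← hc.eq, ← mul_assoc, ← mul_assoc]
  have hza : Commute ((a * b) ^ 2) a := by
    simpa only [mul_inv_cancel_right] using
      (Commute.self_pow (a * b) 2).symm.mul_right hzb.inv_right
  have hz4 : ∀ x, Commute ((a * b) ^ 2) x → Commute ((a * b) ^ 4) x := fun x h => by
    simpa only [← pow_mul] using h.pow_left 2
  have hc4 : (a * b) ^ 4 * c = b * a * b := by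
    refine mul_right_cancel (b := c ^ 3) ?_
    rw [mul_assoc, ← pow_succ', ← mul_pow_three_eq_of_semiconj hca hcb, ← h1, hc.symm.mul_pow]
  have hba : b = a := by
    refine (eq_of_semiconjBy_mul_mul ?_ ?_).symm
    · exact hc4 ▸ SemiconjBy.mul_left (hz4 b hzb) hca
    · have hz : Commute ((a * b) ^ 2) (b⁻¹ * a * b) := (hzb.inv_right.mul_right hza).mul_right hzb
      exact hc4 ▸ SemiconjBy.mul_left (hz4 _ hz) hcb
  refine ⟨hba, ?_⟩
  subst hba
  rw [← sq, ← pow_mul] at hc4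
  rw [eq_inv_mul_of_mul_eq hc4]
  group

end

instance : IsCyclic G := by
  have rel {u v : FreeGroup (Fin 3)} (h : u * v⁻¹ ∈ rels) :
      PresentedGroup.mk rels u = PresentedGroup.mk rels v :=
    PresentedGroup.mk_eq_mk_of_mul_inv_mem h
  have h1 := rel (Set.mem_insert _ _)
  have h2 := rel (Set.mem_insert_of_mem _ (Set.mem_insert _ _))
  have h3 := rel (Set.mem_insert_of_mem _ (Set.mem_insert_of_mem _ (Set.mem_insert _ _)))
  have h4 := rel (Set.mem_insert_of_mem _ (Set.mem_insert_of_mem _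
    (Set.mem_insert_of_mem _ (Set.mem_singleton _))))
  simp only [map_mul, map_pow, map_inv] at h1 h2 h3 h4
  obtain ⟨hb, hc⟩ := eq_and_eq_zpow_of_rels h1 h2 h3 h4
  refine isCyclic_iff_exists_zpowers_eq_top.2
    ⟨PresentedGroup.mk rels a, eq_top_iff.2 fun x _ => ?_⟩
  refine PresentedGroup.generated_by rels _ (fun i => ?_) x
  fin_cases i
  · exact Subgroup.mem_zpowers _
  · change PresentedGroup.mk rels b ∈ _
    exact hb ▸ Subgroup.mem_zpowers _
  · change PresentedGroup.mk rels c ∈ _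
    exact hc ▸ Subgroup.zpow_mem_zpowers _ _

/-- `G` is abelian. -/
theorem is_abelian : ∀ x y : G, x * y = y * x :=
  isMulCommutative_iff.1 inferInstance

end Stmt19
end
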